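/- arXiv:1504.07056 — 5 statements merged into one kernel-verified Lean document; each statement's English description precedes it below -/
import Mathlib

section
/- Let U be a finite set, x ≥ 1 a real number, and S₁, ..., S_k subsets of U each of size at least 2x·ln(3k). Then there exists a subset T ⊆ U with |T| ≤ |U|/x such that T ∩ S_i ≠ ∅ for every 1 ≤ i ≤ k. -/
open scoped BigOperators
open Nat (factorial)
local notation:10000 n "!" => Nat.factorial n

private lemma choose_swap_aux (n m s : ℕ) :
    (n - s).choose m * n.choose s = n.choose m * (n - m).choose s := by
  rcases le_or_gt (m + s) n with h | h
  · have hs : s ≤ n := by omega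
    have hm : m ≤ n := by omega
    have hsm : m ≤ n - s := by omega
    have hms : s ≤ n - m := by omega
    have e1 : n.choose s * s ! * (n - s)! = n ! := Nat.choose_mul_factorial_mul_factorial hs
    have e2 : (n - s).choose m * m ! * (n - s - m)! = (n - s)! :=
      Nat.choose_mul_factorial_mul_factorial hsm
    have e3 : n.choose m * m ! * (n - m)! = n ! := Nat.choose_mul_factorial_mul_factorial hm
    have e4 : (n - m).choose s * s ! * (n - m - s)! = (n - m)! :=
      Nat.choose_mul_factorial_mul_factorial hms
    have hswap : n - s - m = n - m - s := by omega
    have key : ((n - s).choose m * n.choose s) * (m ! * s ! * (n - m - s)!) =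
        (n.choose m * (n - m).choose s) * (m ! * s ! * (n - m - s)!) := by
      calc ((n - s).choose m * n.choose s) * (m ! * s ! * (n - m - s)!)
          = (n.choose s * s !) * ((n - s).choose m * m ! * (n - s - m)!) := by
            rw [hswap]
            try ring
        _ = (n.choose s * s !) * (n - s)! := by rw [e2]
        _ = n ! := e1
        _ = (n.choose m * m !) * (n - m)! := by rw [← e3]
        _ = (n.choose m * m !) * ((n - m).choose s * s ! * (n - m - s)!) := by rw [e4]
        _ = (n.choose m * (n - m).choose s) * (m ! * s ! * (n - m - s)!) := by ring
    exact Nat.eq_of_mul_eq_mul_right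
      (Nat.mul_pos (Nat.mul_pos (Nat.factorial_pos _) (Nat.factorial_pos _))
        (Nat.factorial_pos _)) key
  · rcases Nat.lt_or_ge n m with hm' | hm'
    · rw [Nat.choose_eq_zero_of_lt hm', Nat.choose_eq_zero_of_lt (by omega : n - s < m)]
      simp
    · rcases Nat.lt_or_ge n s with hs' | hs'
      · rw [Nat.choose_eq_zero_of_lt hs', Nat.choose_eq_zero_of_lt (by omega : n - m < s)]
        simp
      · rw [Nat.choose_eq_zero_of_lt (by omega : n - s < m),
          Nat.choose_eq_zero_of_lt (by omega : n - m < s)]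
        simp

private lemma choose_ratio_aux (n m s : ℕ) :
    (n - m).choose s * n ^ s ≤ n.choose s * (n - m) ^ s := by
  rcases le_or_gt s (n - m) with h | h
  · have key : (n - m).descFactorial s * n ^ s ≤ n.descFactorial s * (n - m) ^ s := by
      rw [Nat.descFactorial_eq_prod_range, Nat.descFactorial_eq_prod_range]
      have hpow : ∀ a : ℕ, a ^ s = ∏ _j ∈ Finset.range s, a := by
        intro a; simp
      rw [hpow n, hpow (n - m), ← Finset.prod_mul_distrib, ← Finset.prod_mul_distrib]
      apply Finset.prod_le_prod'
      intro j hj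
      rw [Finset.mem_range] at hj
      have h1 : j ≤ n - m := by omega
      have h2 : m ≤ n := by omega
      have h3 : j ≤ n := by omega
      zify [h1, h2, h3]
      nlinarith [mul_nonneg (by positivity : (0:ℤ) ≤ (j:ℤ)) (by positivity : (0:ℤ) ≤ (m:ℤ))]
    rw [Nat.descFactorial_eq_factorial_mul_choose, Nat.descFactorial_eq_factorial_mul_choose,
      mul_assoc, mul_assoc] at key
    exact Nat.le_of_mul_le_mul_left key (Nat.factorial_pos s)
  · simp [Nat.choose_eq_zero_of_lt h]

/-- **Hitting sets exist deterministically.**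
If `U` is a finite set, `x ≥ 1` a real number, and `S₁, …, S_k ⊆ U` each of size at
least `2x·ln(3k)`, then there is a subset `T ⊆ U` with `|T| ≤ |U|/x` hitting every `Sᵢ`. -/
theorem hitting_set_exists {α : Type*} [DecidableEq α] (U : Finset α) (k : ℕ) (hk : 1 ≤ k)
    (x : ℝ) (hx : 1 ≤ x) (S : Fin k → Finset α)
    (hSU : ∀ i, S i ⊆ U)
    (hS : ∀ i, 2 * x * Real.log (3 * k) ≤ ((S i).card : ℝ)) :
    ∃ T ⊆ U, (T.card : ℝ) ≤ (U.card : ℝ) / x ∧ ∀ i, (T ∩ S i).Nonempty := by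
  classical
  set n := U.card with hn
  have hk1 : (1:ℝ) ≤ k := by exact_mod_cast hk
  have h3k : (1:ℝ) < 3 * k := by nlinarith
  have hlog3k : (1:ℝ) ≤ Real.log (3 * k) := by
    rw [Real.le_log_iff_exp_le (by linarith)]
    calc Real.exp 1 ≤ 2.7182818286 := le_of_lt Real.exp_one_lt_d9
      _ ≤ 3 := by norm_num
      _ ≤ 3 * k := by nlinarith
  have hxpos : (0:ℝ) < x := by linarith
  have i0 : Fin k := ⟨0, hk⟩
  have hn2x : 2 * x ≤ (n:ℝ) := by
    have h1 := hS i0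
    have h2 : ((S i0).card : ℝ) ≤ (n:ℝ) := by exact_mod_cast Finset.card_le_card (hSU i0)
    nlinarith
  have hnpos : (0:ℝ) < (n:ℝ) := by linarith
  set m := ⌈(n:ℝ) / (2 * x)⌉₊ with hmdef
  have hmlb : (n:ℝ) / (2*x) ≤ (m:ℝ) := Nat.le_ceil _
  have hmub : (m:ℝ) < (n:ℝ)/(2*x) + 1 := Nat.ceil_lt_add_one (by positivity)
  have hmn : m ≤ n := by
    rw [hmdef]
    apply Nat.ceil_le.2
    rw [div_le_iff₀ (by linarith : (0:ℝ) < 2 * x)]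
    nlinarith
  have hmnR : (m:ℝ) ≤ (n:ℝ) := by exact_mod_cast hmn
  have hmx : (m:ℝ) ≤ (n:ℝ) / x := by
    have h1 : (1:ℝ) ≤ (n:ℝ)/(2*x) := by
      rw [le_div_iff₀ (by linarith)]; linarith
    have h2 : (n:ℝ)/(2*x) + (n:ℝ)/(2*x) = (n:ℝ)/x := by
      field_simp; ring
    linarith
  -- key per-set counting bound
  have key : ∀ i, ((n - (S i).card).choose m : ℝ) ≤ (n.choose m : ℝ) / (3*k) := by
    intro i
    set s := (S i).card with hsdef
    have hsn : s ≤ n := Finset.card_le_card (hSU i)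
    have hcs : (0:ℝ) < (n.choose s : ℝ) := by exact_mod_cast Nat.choose_pos hsn
    have A : ((n - s).choose m : ℝ) * (n.choose s : ℝ)
        = (n.choose m : ℝ) * ((n - m).choose s : ℝ) := by
      exact_mod_cast congrArg (Nat.cast (R := ℝ)) (choose_swap_aux n m s)
    have B : ((n - m).choose s : ℝ) * (n:ℝ) ^ s ≤ (n.choose s : ℝ) * ((n:ℝ) - m) ^ s := by
      have := choose_ratio_aux n m s
      have hcast : (((n - m).choose s * n ^ s : ℕ) : ℝ) ≤ ((n.choose s * (n - m) ^ s : ℕ) : ℝ) :=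
        by exact_mod_cast this
      push_cast [Nat.cast_sub hmn] at hcast
      convert hcast using 2
    have hnpow : (0:ℝ) < (n:ℝ) ^ s := by positivity
    have C2 : ((n - m).choose s : ℝ) ≤ (n.choose s : ℝ) * (((n:ℝ) - m)/(n:ℝ)) ^ s := by
      rw [div_pow, ← mul_div_assoc, le_div_iff₀ hnpow]
      linarith [B]
    -- bound the ratio power by 1/(3k)
    have hb0 : (0:ℝ) ≤ 1 - (m:ℝ)/(n:ℝ) := by
      rw [sub_nonneg, div_le_one hnpos]; exact hmnR
    have hbase : ((n:ℝ) - m)/(n:ℝ) = 1 - (m:ℝ)/(n:ℝ) := by field_simp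
    have hexp : 1 - (m:ℝ)/(n:ℝ) ≤ Real.exp (-((m:ℝ)/(n:ℝ))) := by
      linarith [Real.add_one_le_exp (-((m:ℝ)/(n:ℝ)))]
    have hpow : (1 - (m:ℝ)/(n:ℝ)) ^ s ≤ Real.exp (-((m:ℝ)/(n:ℝ))) ^ s :=
      pow_le_pow_left₀ hb0 hexp s
    have hexppow : Real.exp (-((m:ℝ)/(n:ℝ))) ^ s = Real.exp (-((s:ℝ) * ((m:ℝ)/(n:ℝ)))) := by
      rw [← Real.exp_nat_mul]; ring_nf
    have hms : Real.log (3*k) ≤ (s:ℝ) * ((m:ℝ)/(n:ℝ)) := by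
      have hstep : Real.log (3*k) ≤ (s:ℝ)/(2*x) := by
        rw [le_div_iff₀ (by linarith : (0:ℝ) < 2*x)]
        have := hS i
        rw [← hsdef] at this
        linarith
      have h1 : (1:ℝ)/(2*x) ≤ (m:ℝ)/(n:ℝ) := by
        rw [div_le_div_iff₀ (by linarith) hnpos, one_mul]
        rw [div_le_iff₀ (by linarith : (0:ℝ) < 2*x)] at hmlb
        linarith
      have hs0 : (0:ℝ) ≤ (s:ℝ) := Nat.cast_nonneg s
      calc Real.log (3*k) ≤ (s:ℝ)/(2*x) := hstep
        _ = (s:ℝ) * ((1:ℝ)/(2*x)) := by ring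
        _ ≤ (s:ℝ) * ((m:ℝ)/(n:ℝ)) := mul_le_mul_of_nonneg_left h1 hs0
    have hratio : (((n:ℝ) - m)/(n:ℝ)) ^ s ≤ 1/(3*k) := by
      rw [hbase]
      calc (1 - (m:ℝ)/(n:ℝ)) ^ s ≤ Real.exp (-((s:ℝ) * ((m:ℝ)/(n:ℝ)))) := by
            rw [← hexppow]; exact hpow
        _ ≤ Real.exp (-(Real.log (3*k))) := Real.exp_le_exp.2 (by linarith)
        _ = 1/(3*k) := by
            rw [Real.exp_neg, Real.exp_log (by linarith : (0:ℝ) < 3*k), one_div]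
    have final : ((n - s).choose m : ℝ) * (n.choose s : ℝ)
        ≤ (n.choose m : ℝ) / (3*k) * (n.choose s : ℝ) := by
      rw [A]
      calc (n.choose m : ℝ) * ((n - m).choose s : ℝ)
          ≤ (n.choose m : ℝ) * ((n.choose s : ℝ) * (1/(3*k))) := by
            apply mul_le_mul_of_nonneg_left _ (Nat.cast_nonneg _)
            calc ((n - m).choose s : ℝ) ≤ (n.choose s : ℝ) * (((n:ℝ) - m)/(n:ℝ)) ^ s := C2
              _ ≤ (n.choose s : ℝ) * (1/(3*k)) :=
                  mul_le_mul_of_nonneg_left hratio (Nat.cast_nonneg _)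
        _ = (n.choose m : ℝ) / (3*k) * (n.choose s : ℝ) := by ring
    exact le_of_mul_le_mul_right final hcs
  -- counting argument
  set P := U.powersetCard m with hPdef
  set bad := Finset.univ.biUnion (fun i : Fin k => (U \ S i).powersetCard m) with hbaddef
  have hcardP : P.card = n.choose m := by
    rw [hPdef, Finset.card_powersetCard]
  have hchoosepos : (0:ℝ) < (n.choose m : ℝ) := by
    exact_mod_cast Nat.choose_pos hmn
  have hcardbad : (bad.card : ℝ) < (P.card : ℝ) := by
    have h1 : bad.card ≤ ∑ i : Fin k, ((U \ S i).powersetCard m).card :=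
      Finset.card_biUnion_le
    have h2 : ∀ i : Fin k, (((U \ S i).powersetCard m).card : ℝ)
        ≤ (n.choose m : ℝ) / (3*k) := by
      intro i
      rw [Finset.card_powersetCard, Finset.card_sdiff_of_subset (hSU i)]
      exact key i
    calc (bad.card : ℝ) ≤ ∑ i : Fin k, (((U \ S i).powersetCard m).card : ℝ) := by
          exact_mod_cast h1
      _ ≤ ∑ _i : Fin k, (n.choose m : ℝ) / (3*k) := Finset.sum_le_sum (fun i _ => h2 i)
      _ = (k:ℝ) * ((n.choose m : ℝ) / (3*k)) := by
          rw [Finset.sum_const, Finset.card_univ, Fintype.card_fin, nsmul_eq_mul]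
      _ = (n.choose m : ℝ) / 3 := by
          field_simp
      _ < (n.choose m : ℝ) := by linarith
      _ = (P.card : ℝ) := by rw [hcardP]
  have hlt : bad.card < P.card := by exact_mod_cast hcardbad
  have hns : ¬ P ⊆ bad := fun hsub => absurd (Finset.card_le_card hsub) (not_le.2 hlt)
  obtain ⟨T, hTP, hTbad⟩ := Finset.not_subset.1 hns
  rw [hPdef, Finset.mem_powersetCard] at hTP
  refine ⟨T, hTP.1, ?_, ?_⟩
  · rw [hTP.2]; exact hmx
  · intro i
    rw [Finset.nonempty_iff_ne_empty]
    intro hemp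
    apply hTbad
    refine Finset.mem_biUnion.2 ⟨i, Finset.mem_univ i,
      Finset.mem_powersetCard.2 ⟨?_, hTP.2⟩⟩
    intro a ha
    refine Finset.mem_sdiff.2 ⟨hTP.1 ha, fun haS => ?_⟩
    have hmem : a ∈ T ∩ S i := Finset.mem_inter.2 ⟨ha, haS⟩
    simp [hemp] at hmem
end

section
/- Let G be a graph with positive integer edge weights, h ≥ 1 an integer, ε > 0, ρ_i = ε·2^i/h, and G_i the graph with weights ⌈w(u,v,G)/ρ_i⌉. If nodes u, v satisfy 2^i ≤ d^h(u,v,G) ≤ 2^{i+1}, then d(u,v,G_i) ≤ (1 + 2/ε)·h. -/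
open scoped ENNReal BigOperators

/-- Weight of the minimum-weight walk from `u` to `v` using at most `h` edges
(`⊤` if none exists; missing edges have weight `⊤`). -/
noncomputable def hdist {V : Type*} [DecidableEq V] (w : V → V → ℝ≥0∞) : ℕ → V → V → ℝ≥0∞
  | 0, u, v => if u = v then 0 else ⊤
  | (h + 1), u, v => min (hdist w h u v) (⨅ x, hdist w h u x + w x v)

/-- Shortest-path distance from `u` to `v`. -/
noncomputable def gdist {V : Type*} [DecidableEq V] (w : V → V → ℝ≥0∞) (u v : V) : ℝ≥0∞ :=
  ⨅ h, hdist w h u v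

/-- Rounded-up scaled weight `⌈x / ρ⌉` (kept `⊤` for a missing edge). -/
noncomputable def rceil (ρ x : ℝ≥0∞) : ℝ≥0∞ :=
  if x = ⊤ then ⊤ else (⌈(x / ρ).toReal⌉₊ : ℝ≥0∞)

lemma rceil_le (ρ x : ℝ≥0∞) (h0 : ρ ≠ 0) (htop : ρ ≠ ⊤) : rceil ρ x ≤ x / ρ + 1 := by
  unfold rceil
  split_ifs with hx
  · subst hx
    rw [ENNReal.top_div_of_ne_top htop]
    simp
  · have hfin : x / ρ ≠ ⊤ := (ENNReal.div_lt_top hx h0).ne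
    have h1 : (⌈(x / ρ).toReal⌉₊ : ℝ) ≤ (x / ρ).toReal + 1 :=
      (Nat.ceil_lt_add_one ENNReal.toReal_nonneg).le
    calc (⌈(x / ρ).toReal⌉₊ : ℝ≥0∞) = ENNReal.ofReal (⌈(x / ρ).toReal⌉₊ : ℝ) := by
          simp [ENNReal.ofReal_natCast]
      _ ≤ ENNReal.ofReal ((x / ρ).toReal + 1) := ENNReal.ofReal_le_ofReal h1
      _ = x / ρ + 1 := by
          rw [ENNReal.ofReal_add ENNReal.toReal_nonneg zero_le_one,
            ENNReal.ofReal_toReal hfin, ENNReal.ofReal_one]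

lemma hdist_rceil_le {V : Type*} [DecidableEq V] (w : V → V → ℝ≥0∞) (ρ : ℝ≥0∞)
    (h0 : ρ ≠ 0) (htop : ρ ≠ ⊤) :
    ∀ h u v, hdist (fun a b => rceil ρ (w a b)) h u v ≤ hdist w h u v / ρ + h := by
  intro h
  induction h with
  | zero =>
    intro u v
    simp only [hdist, Nat.cast_zero, add_zero]
    split_ifs with huv
    · simp
    · rw [ENNReal.top_div_of_ne_top htop]
  | succ h ih =>
    intro u v
    simp only [hdist]
    have hc : ((h : ℝ≥0∞) + 1) = ((h + 1 : ℕ) : ℝ≥0∞) := by push_cast; ring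
    rcases min_cases (hdist w h u v) (⨅ x, hdist w h u x + w x v) with ⟨hm, _⟩ | ⟨hm, _⟩
    · rw [hm]
      calc min (hdist (fun a b => rceil ρ (w a b)) h u v)
            (⨅ x, hdist (fun a b => rceil ρ (w a b)) h u x + rceil ρ (w x v))
          ≤ hdist (fun a b => rceil ρ (w a b)) h u v := min_le_left _ _
        _ ≤ hdist w h u v / ρ + h := ih u v
        _ ≤ hdist w h u v / ρ + (h + 1 : ℕ) := by
            push_cast; exact add_le_add_right (by exact_mod_cast le_self_add) _
    · rw [hm]
      refine le_trans (min_le_right _ _) ?_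
      rw [ENNReal.iInf_div_of_ne h0 htop, ENNReal.iInf_add]
      refine le_iInf fun x => le_trans (iInf_le _ x) ?_
      calc hdist (fun a b => rceil ρ (w a b)) h u x + rceil ρ (w x v)
          ≤ (hdist w h u x / ρ + h) + (w x v / ρ + 1) :=
            add_le_add (ih u x) (rceil_le ρ (w x v) h0 htop)
        _ = (hdist w h u x + w x v) / ρ + ((h : ℝ≥0∞) + 1) := by
            rw [ENNReal.add_div]; ring
        _ = (hdist w h u x + w x v) / ρ + ((h + 1 : ℕ) : ℝ≥0∞) := by rw [hc]

/-- **Rounded distances have few hops** (Lemma 2.1(ii)):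
if `2^i ≤ d^h(u,v,G) ≤ 2^{i+1}` then `d(u,v,Gᵢ) ≤ (1 + 2/ε)·h`,
where `Gᵢ` has weights `⌈w(u,v,G)/ρᵢ⌉` and `ρᵢ = ε·2^i/h`. -/
theorem rounding_hop_bound {V : Type*} [DecidableEq V] (w : V → V → ℝ≥0∞)
    (W h : ℕ) (hh : 1 ≤ h) (ε : ℝ) (hε : 0 < ε)
    (hint : ∀ u v, w u v = ⊤ ∨ ∃ n : ℕ, 1 ≤ n ∧ n ≤ W ∧ w u v = (n : ℝ≥0∞))
    (i : ℕ) (u v : V)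
    (hlo : (2 : ℝ≥0∞) ^ i ≤ hdist w h u v)
    (hhi : hdist w h u v ≤ (2 : ℝ≥0∞) ^ (i + 1)) :
    gdist (fun a b => rceil (ENNReal.ofReal (ε * 2 ^ i / h)) (w a b)) u v ≤
      ENNReal.ofReal ((1 + 2 / ε) * h) := by

  set ρ : ℝ≥0∞ := ENNReal.ofReal (ε * 2 ^ i / h) with hρ
  have hhpos : (0 : ℝ) < h := by exact_mod_cast hh
  have hρpos : (0 : ℝ) < ε * 2 ^ i / h := by positivity
  have h0 : ρ ≠ 0 := by
    rw [hρ]; exact (ENNReal.ofReal_pos.mpr hρpos).ne'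
  have htop : ρ ≠ ⊤ := ENNReal.ofReal_ne_top
  have key : gdist (fun a b => rceil ρ (w a b)) u v ≤ hdist w h u v / ρ + h :=
    le_trans (iInf_le _ h) (hdist_rceil_le w ρ h0 htop h u v)
  refine key.trans ?_
  have h2 : hdist w h u v / ρ + (h : ℝ≥0∞) ≤ (2 : ℝ≥0∞) ^ (i + 1) / ρ + h :=
    add_le_add_left (ENNReal.div_le_div_right hhi ρ) _
  refine h2.trans ?_
  have hpow : (2 : ℝ≥0∞) ^ (i + 1) = ENNReal.ofReal ((2 : ℝ) ^ (i + 1)) := by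
    rw [ENNReal.ofReal_pow (by norm_num : (0:ℝ) ≤ 2), ENNReal.ofReal_ofNat]
  rw [hpow, hρ, ← ENNReal.ofReal_div_of_pos hρpos, ← ENNReal.ofReal_natCast h,
    ← ENNReal.ofReal_add (by positivity) (by positivity)]
  refine ENNReal.ofReal_le_ofReal (le_of_eq ?_)
  have hε' : (ε : ℝ) ≠ 0 := hε.ne'
  have h2i : (2 : ℝ) ^ i ≠ 0 := by positivity
  field_simp
  ring
end

section
/- Let G be a graph with positive integer edge weights, h ≥ 1, ε > 0, ρ_i = ε·2^i/h, and G_i the graph with weights ⌈w(u,v,G)/ρ_i⌉. If nodes u, v satisfy 2^i ≤ d^h(u,v,G) ≤ 2^{i+1}, then ρ_i · d(u,v,G_i) ≤ (1+ε)·d^h(u,v,G). -/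
open scoped ENNReal BigOperators

lemma rceil_mul_le (ρ x : ℝ≥0∞) (h0 : ρ ≠ 0) (ht : ρ ≠ ⊤) :
    ρ * rceil ρ x ≤ x + ρ := by
  by_cases hx : x = ⊤
  · simp [rceil, hx]
  · rw [rceil, if_neg hx]
    have hr : 0 < ρ.toReal := ENNReal.toReal_pos h0 ht
    have hfin : ρ * (⌈(x / ρ).toReal⌉₊ : ℝ≥0∞) ≠ ⊤ := by
      exact ENNReal.mul_ne_top ht (ENNReal.natCast_ne_top _)
    have hfin' : x + ρ ≠ ⊤ := ENNReal.add_ne_top.mpr ⟨hx, ht⟩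
    rw [← ENNReal.toReal_le_toReal hfin hfin']
    rw [ENNReal.toReal_mul, ENNReal.toReal_add hx ht, ENNReal.toReal_natCast]
    have hdiv : (x / ρ).toReal = x.toReal / ρ.toReal := ENNReal.toReal_div x ρ
    have hceil : (⌈(x / ρ).toReal⌉₊ : ℝ) ≤ x.toReal / ρ.toReal + 1 := by
      rw [hdiv]
      exact le_of_lt (Nat.ceil_lt_add_one (div_nonneg ENNReal.toReal_nonneg hr.le))
    calc ρ.toReal * (⌈(x / ρ).toReal⌉₊ : ℝ) ≤ ρ.toReal * (x.toReal / ρ.toReal + 1) := by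
          exact mul_le_mul_of_nonneg_left hceil hr.le
      _ = x.toReal + ρ.toReal := by field_simp
lemma key {V : Type*} [DecidableEq V] (w : V → V → ℝ≥0∞) (ρ : ℝ≥0∞)
    (h0 : ρ ≠ 0) (ht : ρ ≠ ⊤) :
    ∀ k (u v : V), ρ * hdist (fun a b => rceil ρ (w a b)) k u v ≤ hdist w k u v + k * ρ := by
  intro k
  induction k with
  | zero =>
    intro u v
    by_cases h : u = v <;> simp [hdist, h, ENNReal.mul_top h0]
  | succ k ih =>
    intro u v
    have h1 : ρ * hdist (fun a b => rceil ρ (w a b)) k u v ≤ hdist w k u v + (k + 1 : ℕ) * ρ := by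
      refine (ih u v).trans (add_le_add_right ?_ _)
      exact mul_le_mul_left (by exact_mod_cast Nat.cast_le.mpr (Nat.le_succ k)) ρ
    have h2 : ρ * (⨅ x, hdist (fun a b => rceil ρ (w a b)) k u x + rceil ρ (w x v)) ≤
        (⨅ x, hdist w k u x + w x v) + (k + 1 : ℕ) * ρ := by
      rw [ENNReal.iInf_add]
      refine le_iInf fun x => ?_
      calc ρ * (⨅ y, hdist (fun a b => rceil ρ (w a b)) k u y + rceil ρ (w y v))
          ≤ ρ * (hdist (fun a b => rceil ρ (w a b)) k u x + rceil ρ (w x v)) :=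
            mul_le_mul_right (iInf_le _ x) ρ
        _ = ρ * hdist (fun a b => rceil ρ (w a b)) k u x + ρ * rceil ρ (w x v) := by
            rw [mul_add]
        _ ≤ (hdist w k u x + k * ρ) + (w x v + ρ) :=
            add_le_add (ih u x) (rceil_mul_le ρ (w x v) h0 ht)
        _ = hdist w k u x + w x v + (k + 1 : ℕ) * ρ := by push_cast; ring
    show ρ * min _ _ ≤ min _ _ + _
    rw [← min_add_add_right]
    exact le_min ((mul_le_mul_right (min_le_left _ _) ρ).trans h1)
      ((mul_le_mul_right (min_le_right _ _) ρ).trans h2)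

/-- **Rounding preserves bounded-hop distances up to `1+ε`** (Lemma 2.1(iii)):
if `2^i ≤ d^h(u,v,G) ≤ 2^{i+1}` then `ρᵢ · d(u,v,Gᵢ) ≤ (1+ε)·d^h(u,v,G)`,
where `Gᵢ` has weights `⌈w(u,v,G)/ρᵢ⌉` and `ρᵢ = ε·2^i/h`. -/
theorem rounding_upper_bound {V : Type*} [DecidableEq V] (w : V → V → ℝ≥0∞)
    (W h : ℕ) (hh : 1 ≤ h) (ε : ℝ) (hε : 0 < ε)
    (hint : ∀ u v, w u v = ⊤ ∨ ∃ n : ℕ, 1 ≤ n ∧ n ≤ W ∧ w u v = (n : ℝ≥0∞))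
    (i : ℕ) (u v : V)
    (hlo : (2 : ℝ≥0∞) ^ i ≤ hdist w h u v)
    (hhi : hdist w h u v ≤ (2 : ℝ≥0∞) ^ (i + 1)) :
    ENNReal.ofReal (ε * 2 ^ i / h) *
        gdist (fun a b => rceil (ENNReal.ofReal (ε * 2 ^ i / h)) (w a b)) u v ≤
      ENNReal.ofReal (1 + ε) * hdist w h u v := by
  set ρ := ENNReal.ofReal (ε * 2 ^ i / h) with hρ
  have hhpos : (0 : ℝ) < h := by exact_mod_cast hh
  have hρpos : (0 : ℝ) < ε * 2 ^ i / h := by positivity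
  have h0 : ρ ≠ 0 := by simp [hρ, ENNReal.ofReal_pos.mpr hρpos, ne_of_gt]
  have ht : ρ ≠ ⊤ := ENNReal.ofReal_ne_top
  have hg : gdist (fun a b => rceil ρ (w a b)) u v ≤
      hdist (fun a b => rceil ρ (w a b)) h u v := iInf_le _ h
  have step1 : ρ * gdist (fun a b => rceil ρ (w a b)) u v ≤ hdist w h u v + h * ρ :=
    (mul_le_mul_right hg ρ).trans (key w ρ h0 ht h u v)
  have hre : (h : ℝ) * (ε * 2 ^ i / h) = ε * 2 ^ i := by field_simp
  have hhe : (h : ℝ≥0∞) * ρ = ENNReal.ofReal ε * 2 ^ i := by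
    rw [hρ, ← ENNReal.ofReal_natCast, ← ENNReal.ofReal_mul (Nat.cast_nonneg h), hre,
      ENNReal.ofReal_mul hε.le]
    congr 1
    rw [ENNReal.ofReal_pow (by norm_num : (0:ℝ) ≤ 2)]
    norm_num
  have step2 : (h : ℝ≥0∞) * ρ ≤ ENNReal.ofReal ε * hdist w h u v := by
    rw [hhe]
    exact mul_le_mul_right hlo _
  have hfin : hdist w h u v ≠ ⊤ :=
    ne_top_of_le_ne_top (by simp : (2:ℝ≥0∞)^(i+1) ≠ ⊤) hhi
  calc ρ * gdist (fun a b => rceil ρ (w a b)) u v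
      ≤ hdist w h u v + (h : ℝ≥0∞) * ρ := step1
    _ ≤ hdist w h u v + ENNReal.ofReal ε * hdist w h u v := add_le_add_right step2 _
    _ = (1 + ENNReal.ofReal ε) * hdist w h u v := by rw [add_mul, one_mul]
    _ = ENNReal.ofReal (1 + ε) * hdist w h u v := by
        rw [ENNReal.ofReal_add (by norm_num) hε.le, ENNReal.ofReal_one]
end

section
/- Let π be a path in a weighted graph G consisting of exactly m edges, let h be a positive integer with h ≤ m, and set l = ⌈m/h⌉. Then π contains a subpath π' consisting of exactly h consecutive edges whose total weight is at most 2·w(π)/l, where w(π) is the total weight of π. -/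
open scoped BigOperators

lemma cheap_block_sum_blocks (h : ℕ) (c : ℕ → ℝ) :
    ∀ k : ℕ, ∑ i ∈ Finset.range k, (∑ t ∈ Finset.Ico (i * h) (i * h + h), c t)
      = ∑ t ∈ Finset.range (k * h), c t := by
  intro k
  induction k with
  | zero => simp
  | succ k ih =>
    rw [Finset.sum_range_succ, ih, Nat.succ_mul, Finset.range_eq_Ico, Finset.range_eq_Ico]
    exact Finset.sum_Ico_consecutive c (Nat.zero_le (k * h)) (Nat.le_add_right (k * h) h)

/-- **A cheap block of `h` consecutive edges exists.**
If a path `π` has exactly `m` edges (with positive weights `c 0, …, c (m-1)`),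
`1 ≤ h ≤ m`, and `l = ⌈m/h⌉`, then `π` contains a subpath of exactly `h`
consecutive edges of total weight at most `2·w(π)/l`. -/
theorem cheap_block_exists (m h : ℕ) (hh : 1 ≤ h) (hhm : h ≤ m) (c : ℕ → ℝ)
    (hpos : ∀ t < m, 0 < c t) :
    ∃ j, j + h ≤ m ∧
      ∑ t ∈ Finset.Ico j (j + h), c t ≤
        2 * (∑ t ∈ Finset.range m, c t) / (⌈(m : ℝ) / (h : ℝ)⌉₊ : ℝ) := by
  have hm : 1 ≤ m := le_trans hh hhm
  have hhR : (0 : ℝ) < (h : ℝ) := by exact_mod_cast hh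
  set l := ⌈(m : ℝ) / (h : ℝ)⌉₊ with hl
  have hl1 : 1 ≤ l := by
    rw [hl, Nat.one_le_ceil_iff]
    positivity
  have hl1h : (l - 1) * h ≤ m := by
    have h1 : l - 1 < l := Nat.sub_lt hl1 one_pos
    have h2 : ((l - 1 : ℕ) : ℝ) < (m : ℝ) / h := by
      rw [← Nat.lt_ceil]; exact h1
    have h3 : ((l - 1 : ℕ) : ℝ) * h < m := by
      rw [lt_div_iff₀ hhR] at h2; exact h2
    have : (((l - 1) * h : ℕ) : ℝ) < (m : ℝ) := by push_cast; exact h3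
    exact_mod_cast this.le
  set W := ∑ t ∈ Finset.range m, c t with hW
  have hWnn : 0 ≤ W := Finset.sum_nonneg fun t ht =>
    (hpos t (Finset.mem_range.mp ht)).le
  -- starting positions
  set s : ℕ → ℕ := fun i => if i < l - 1 then i * h else m - h with hs
  set f : ℕ → ℝ := fun i => ∑ t ∈ Finset.Ico (s i) (s i + h), c t with hf
  have hsub : ∀ j, j + h ≤ m →
      ∑ t ∈ Finset.Ico j (j + h), c t ≤ W := by
    intro j hj
    apply Finset.sum_le_sum_of_subset_of_nonneg
    · intro t ht
      simp only [Finset.mem_Ico] at ht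
      exact Finset.mem_range.mpr (lt_of_lt_of_le ht.2 hj)
    · intro t ht _
      exact (hpos t (Finset.mem_range.mp ht)).le
  have hsum : ∑ i ∈ Finset.range l, f i ≤ 2 * W := by
    have hlsplit : l = (l - 1) + 1 := (Nat.succ_pred_eq_of_pos hl1).symm
    rw [hlsplit, Finset.sum_range_succ]
    have h1 : ∑ i ∈ Finset.range (l - 1), f i = ∑ t ∈ Finset.range ((l - 1) * h), c t := by
      rw [← cheap_block_sum_blocks h c (l - 1)]
      apply Finset.sum_congr rfl
      intro i hi
      simp only [hf, hs, if_pos (Finset.mem_range.mp hi)]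
    have h2 : ∑ t ∈ Finset.range ((l - 1) * h), c t ≤ W := by
      apply Finset.sum_le_sum_of_subset_of_nonneg
      · exact Finset.range_subset_range.mpr hl1h
      · intro t ht _; exact (hpos t (Finset.mem_range.mp ht)).le
    have h3 : f (l - 1) ≤ W := by
      simp only [hf, hs, if_neg (lt_irrefl (l - 1))]
      exact hsub (m - h) (by omega)
    rw [h1]; linarith
  have hlR : (0 : ℝ) < (l : ℝ) := by exact_mod_cast hl1
  obtain ⟨i, hi, hfi⟩ := Finset.exists_le_of_sum_le
    (s := Finset.range l) (f := f) (g := fun _ => 2 * W / l)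
    ⟨0, Finset.mem_range.mpr hl1⟩
    (by
      rw [Finset.sum_const, Finset.card_range, nsmul_eq_mul]
      have heq : (l : ℝ) * (2 * W / ↑l) = 2 * W := by
        field_simp
      rw [heq]; exact hsum)
  refine ⟨s i, ?_, hfi⟩
  by_cases hcase : i < l - 1
  · simp only [hs, if_pos hcase]
    calc i * h + h = (i + 1) * h := by ring
    _ ≤ (l - 1) * h := Nat.mul_le_mul_right h (by omega)
    _ ≤ m := hl1h
  · simp only [hs, if_neg hcase]; omega
end

section
/- Let U be a finite set whose elements have distinct identifiers of b bits, and let d be a metric on U. Run the bit-by-bit ruling set process: T₀ = U, and in iteration j, a node u ∈ T_{j-1} with j-th ID bit 0 stays in T_j, while a node u with j-th bit 1 stays in T_j iff no node v ∈ T_{j-1} with j-th bit 0 satisfies d(u,v) ≤ c. Then T = T_b satisfies: (1) any two distinct nodes of T are at distance ≥ c (provided distinct nodes have distinct IDs and all pairwise distances less than c force differing bits to eliminate one of the pair), and (2) every node of U is within distance b·c of some node of T. -/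
/-- One family of sets produced by the bit-by-bit ruling set process:
`T₀ = U` (all nodes); in iteration `j+1`, a node `u ∈ T_j` with `(j)`-th ID bit `0`
stays, while a node with bit `1` stays iff no node `v ∈ T_j` with bit `0` is within
distance `c` of it. -/
def rulingStep {V : Type*} (bit : V → ℕ → Bool) (d : V → V → ℝ) (c : ℝ) : ℕ → Set V
  | 0 => Set.univ
  | (j + 1) => {u ∈ rulingStep bit d c j |
      bit u j = false ∨ ∀ v ∈ rulingStep bit d c j, bit v j = false → c < d u v}

lemma rulingStep_antitone {V : Type*} (bit : V → ℕ → Bool) (d : V → V → ℝ) (c : ℝ)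
    {j k : ℕ} (h : j ≤ k) : rulingStep bit d c k ⊆ rulingStep bit d c j := by
  induction k with
  | zero => simp_all
  | succ k ih =>
    rcases Nat.eq_or_lt_of_le h with rfl | h
    · exact subset_rfl
    · exact fun u hu => ih (Nat.lt_succ_iff.mp h) hu.1

lemma rulingStep_cover {V : Type*} (bit : V → ℕ → Bool) (d : V → V → ℝ)
    (htri : ∀ u v x, d u x ≤ d u v + d v x) (hd0 : ∀ u, d u u = 0)
    (c : ℝ) (hc0 : (0:ℝ) ≤ c) (b : ℕ) (u : V) :
    ∃ v ∈ rulingStep bit d c b, d u v ≤ (b : ℝ) * c := by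
  induction b with
  | zero => exact ⟨u, by simp [rulingStep], by simp [hd0]⟩
  | succ j ih =>
    obtain ⟨v, hv, hdv⟩ := ih
    by_cases hv' : v ∈ rulingStep bit d c (j + 1)
    · refine ⟨v, hv', ?_⟩
      have : (j : ℝ) * c ≤ (j + 1 : ℕ) * c := by push_cast; nlinarith
      linarith
    · simp only [rulingStep, Set.mem_setOf_eq, not_and_or, not_or] at hv'
      rcases hv' with h | h
      · exact absurd hv h
      push_neg at h
      obtain ⟨w, hw, hbw, hdw⟩ := h.2
      refine ⟨w, ⟨hw, Or.inl hbw⟩, ?_⟩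
      have := htri u v w
      push_cast
      nlinarith

/-- **Correctness of the bit-by-bit ruling set process** (Goldberg et al.):
with distinct `b`-bit IDs and a metric `d`, the final set `T = T_b` satisfies
(1) distinct nodes of `T` are at distance at least `c`, and
(2) every node is within distance `b·c` of some node of `T`. -/
theorem rulingStep_correct {V : Type*} [Fintype V] (b : ℕ) (bit : V → ℕ → Bool)
    (hinj : ∀ u v : V, (∀ j < b, bit u j = bit v j) → u = v)
    (d : V → V → ℝ) (hd0 : ∀ u, d u u = 0) (hdsymm : ∀ u v, d u v = d v u)
    (htri : ∀ u v x, d u x ≤ d u v + d v x) (hnonneg : ∀ u v, 0 ≤ d u v)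
    (c : ℝ) (hc : 1 ≤ c) :
    (∀ u ∈ rulingStep bit d c b, ∀ v ∈ rulingStep bit d c b, u ≠ v → c ≤ d u v) ∧
      (∀ u : V, ∃ v ∈ rulingStep bit d c b, d u v ≤ (b : ℝ) * c) := by
  constructor
  · intro u hu v hv huv
    by_contra hlt
    push_neg at hlt
    -- exists a differing bit
    have hex : ∃ j, j < b ∧ bit u j ≠ bit v j := by
      by_contra h
      push_neg at h
      exact huv (hinj u v h)
    obtain ⟨j, hjb, hne⟩ := hex
    have hu' : u ∈ rulingStep bit d c (j + 1) :=
      rulingStep_antitone bit d c hjb hu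
    have hv' : v ∈ rulingStep bit d c (j + 1) :=
      rulingStep_antitone bit d c hjb hv
    have huj : u ∈ rulingStep bit d c j := hu'.1
    have hvj : v ∈ rulingStep bit d c j := hv'.1
    -- WLOG on which bit is false
    cases hbu : bit u j with
    | false =>
      have hbv : bit v j = true := by
        cases hb : bit v j
        · exact absurd (hbu.trans hb.symm) hne
        · rfl
      rcases hv'.2 with h | h
      · simp [hbv] at h
      · have := h u huj hbu
        linarith [hdsymm u v]
    | true =>
      have hbv : bit v j = false := by
        cases hb : bit v j
        · rfl
        · exact absurd (hbu.trans hb.symm) hne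
      rcases hu'.2 with h | h
      · simp [hbu] at h
      · have := h v hvj hbv
        linarith
  · exact fun u => rulingStep_cover bit d htri hd0 c (le_trans zero_le_one hc) b u
end
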